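/- arXiv:1306.2793 — 4 statements merged into one kernel-verified Lean document; each statement's English description precedes it below -/
import Mathlib

section
/- Let d ≥ 1, σ¹, …, σ^d ∈ ℝ, (ρ_{ij})_{1≤i,j≤d} a real matrix, and (x₀, p₀) ∈ ℝ^d × ℝ^d. For l = 1, …, d define c^l = σ^l Σ_{i=1}^d ρ_{li} σ^i p₀^i x₀^i and set x^l(t) = x₀^l e^{c^l t}, p^l(t) = p₀^l e^{−c^l t}. Then (x(t), p(t)) solves the Hamiltonian ODE system ẋ^l(t) = σ^l x^l(t) Σ_{i=1}^d ρ_{li} σ^i p^i(t) x^i(t), ṗ^l(t) = −σ^l p^l(t) Σ_{i=1}^d ρ_{li} σ^i p^i(t) x^i(t) with (x(0), p(0)) = (x₀, p₀). -/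
open Real

/-! Along `x^l(t) = x₀^l e^{c^l t}`, `p^l(t) = p₀^l e^{-c^l t}` every product `p^i x^i` is
constant, so the right-hand sides of the Hamiltonian equations are `c^l x^l` and `-c^l p^l`,
which are exactly the derivatives of these exponentials. -/

theorem hasDerivAt_const_mul_exp_mul (a b t : ℝ) :
    HasDerivAt (fun s => a * exp (b * s)) (b * (a * exp (b * t))) t := by
  have h := (((hasDerivAt_id t).const_mul b).exp).const_mul a
  simp only [id, mul_one] at h
  exact h.congr_deriv (by ring)

theorem mul_exp_neg_mul_mul_mul_exp_mul (p x c t : ℝ) :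
    p * exp (-c * t) * (x * exp (c * t)) = p * x := by
  have h : exp (-c * t) * exp (c * t) = 1 := by
    rw [neg_mul, exp_neg, inv_mul_cancel₀ (exp_ne_zero _)]
  linear_combination p * x * h

theorem stmt_13_general (d : ℕ) (σ : Fin d → ℝ) (ρ : Matrix (Fin d) (Fin d) ℝ)
    (x₀ p₀ : Fin d → ℝ) :
    let c : Fin d → ℝ := fun l => σ l * ∑ i : Fin d, ρ l i * σ i * p₀ i * x₀ i
    let x : ℝ → Fin d → ℝ := fun t l => x₀ l * Real.exp (c l * t)
    let p : ℝ → Fin d → ℝ := fun t l => p₀ l * Real.exp (-(c l) * t)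
    (∀ (l : Fin d) (t : ℝ),
      HasDerivAt (fun s => x s l)
        (σ l * x t l * ∑ i : Fin d, ρ l i * σ i * p t i * x t i) t) ∧
    (∀ (l : Fin d) (t : ℝ),
      HasDerivAt (fun s => p s l)
        (-(σ l * p t l * ∑ i : Fin d, ρ l i * σ i * p t i * x t i)) t) ∧
    x 0 = x₀ ∧ p 0 = p₀ := by
  intro c x p
  have rhs_eq (l : Fin d) (t : ℝ) :
      σ l * ∑ i : Fin d, ρ l i * σ i * p t i * x t i = c l := by
    congr 1
    refine Finset.sum_congr rfl fun i _ => ?_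
    rw [mul_assoc, mul_exp_neg_mul_mul_mul_exp_mul, ← mul_assoc]
  refine ⟨fun l t => ?_, fun l t => ?_, ?_, ?_⟩
  · convert hasDerivAt_const_mul_exp_mul (x₀ l) (c l) t using 1
    rw [mul_right_comm, rhs_eq]
  · convert hasDerivAt_const_mul_exp_mul (p₀ l) (-c l) t using 1
    rw [mul_right_comm, rhs_eq, neg_mul]
  · funext l; simp [x]
  · funext l; simp [p]

/-- With `c^l = σ^l Σᵢ ρ_{li} σ^i p₀^i x₀^i`, the explicit formulas
`x^l(t) = x₀^l e^{c^l t}`, `p^l(t) = p₀^l e^{-c^l t}` solve the `d`-dimensional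
Black–Scholes Hamiltonian ODEs with initial condition `(x₀, p₀)`. -/
theorem stmt_13 (d : ℕ) (hd : 1 ≤ d) (σ : Fin d → ℝ) (ρ : Matrix (Fin d) (Fin d) ℝ)
    (x₀ p₀ : Fin d → ℝ) :
    let c : Fin d → ℝ := fun l => σ l * ∑ i : Fin d, ρ l i * σ i * p₀ i * x₀ i
    let x : ℝ → Fin d → ℝ := fun t l => x₀ l * Real.exp (c l * t)
    let p : ℝ → Fin d → ℝ := fun t l => p₀ l * Real.exp (-(c l) * t)
    (∀ (l : Fin d) (t : ℝ),
      HasDerivAt (fun s => x s l)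
        (σ l * x t l * ∑ i : Fin d, ρ l i * σ i * p t i * x t i) t) ∧
    (∀ (l : Fin d) (t : ℝ),
      HasDerivAt (fun s => p s l)
        (-(σ l * p t l * ∑ i : Fin d, ρ l i * σ i * p t i * x t i)) t) ∧
    x 0 = x₀ ∧ p 0 = p₀ :=
  stmt_13_general d σ ρ x₀ p₀
end

section
/- Fix σ > 0 and K > 0, and consider the 2×2 matrix M(x₁*, p₁*) with rows ((2/K)(1 − log(K/2)), −σ²K/2) and ((2/K)(−1 + log(K/2)), −σ²K/2), obtained by differentiating the inverse Hamiltonian flow at the optimal configuration x₁* = (K/2, K/2), p₁* = ((2/(σ²K)) log(K/2), (2/(σ²K)) log(K/2)). Then det M(x₁*, p₁*) = 2σ²(log(K/2) − 1), and this determinant vanishes if and only if K = 2e. In particular the non-focality condition fails precisely at the critical strike K* = 2e. -/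
open Real Matrix

/-- The matrix `M(x₁*, p₁*)` of derivatives of the projected inverse Hamiltonian flow at
the optimal configuration has determinant `2σ²(log(K/2) - 1)`, which vanishes if and
only if `K = 2e`: non-focality fails precisely at the critical strike `K* = 2e`. -/
theorem stmt_16 (σ K : ℝ) (hσ : 0 < σ) (hK : 0 < K) :
    let M : Matrix (Fin 2) (Fin 2) ℝ :=
      !![2 / K * (1 - Real.log (K / 2)), -(σ ^ 2 * K / 2);
         2 / K * (-1 + Real.log (K / 2)), -(σ ^ 2 * K / 2)]
    M.det = 2 * σ ^ 2 * (Real.log (K / 2) - 1) ∧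
    (M.det = 0 ↔ K = 2 * Real.exp 1) := by
  intro M
  have hdet : M.det = 2 * σ ^ 2 * (Real.log (K / 2) - 1) := by
    simp only [M, det_fin_two_of]
    field_simp
    ring
  refine ⟨hdet, ?_⟩
  rw [hdet]
  constructor
  · intro h
    have hσ2 : (2 : ℝ) * σ ^ 2 ≠ 0 := by positivity
    have hL : Real.log (K / 2) = 1 := by
      have := mul_eq_zero.mp h
      rcases this with h' | h'
      · exact absurd h' hσ2
      · linarith
    have : K / 2 = Real.exp 1 := by
      rw [← Real.exp_log (by linarith : (0:ℝ) < K / 2), hL]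
    linarith
  · intro h
    have : K / 2 = Real.exp 1 := by rw [h]; ring
    rw [this, Real.log_exp]
    ring
end

section
/- Let d ≥ 2, σ > 0 and K > 0, and write L = log(K/d). Consider the d×d real matrix M with entries: M_{i1} = −σ²K/d for all i = 1,…,d; M_{1j} = (1 − L)·d/K for j = 2,…,d; M_{ii} = −(1 − L)·d/K for i = 2,…,d; and M_{ij} = 0 for all other entries (i ≠ j, i,j ≥ 2, and i ≠ 1). Then det M = (−1)^d σ² K [ (1 − L) d/K ]^{d−1}. Consequently det M = 0 if and only if K = d·e, i.e. the non-focality condition for the fully symmetric d-asset Black–Scholes basket fails exactly at strike K* = d·e. -/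
/-!
Adding all rows of `M` to the first one makes it lower triangular: off the first column the
column sums vanish, since the first-row entry `(1 - L) d / K` cancels the diagonal entry below
it, while the first column sums to `d · (-σ²K/d) = -σ²K`. Hence
`det M = -σ²K · (-(1 - L) d / K)^(d-1)`, which vanishes iff `L = 1`, i.e. `K = d e`.
-/

open Real Matrix

namespace Matrix

variable {R : Type*} [CommRing R] {n : ℕ}

def arrowhead (n : ℕ) (a c : R) : Matrix (Fin (n + 1)) (Fin (n + 1)) R :=
  of fun i j => if j = 0 then a else if i = 0 then c else if i = j then -c else 0

theorem sum_arrowhead_apply (a c : R) (j : Fin (n + 1)) :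
    ∑ k, arrowhead n a c k j = if j = 0 then (n + 1) * a else 0 := by
  split_ifs with hj
  · simp [arrowhead, hj]
  · obtain ⟨j, rfl⟩ := Fin.exists_succ_eq.mpr hj
    simp [arrowhead, Fin.sum_univ_succ, Fin.succ_inj]

theorem det_updateRow_sum_rows {ι : Type*} [Fintype ι] [DecidableEq ι] (A : Matrix ι ι R)
    (i : ι) : (A.updateRow i (∑ k, A.row k)).det = A.det := by
  have h := det_updateRow_sum A i 1
  simp only [Pi.one_apply, one_smul] at h
  exact h

theorem isLowerTriangular_updateRow_sum_rows_arrowhead (a c : R) :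
    ((arrowhead n a c).updateRow 0 (∑ k, (arrowhead n a c).row k)).IsLowerTriangular := by
  intro i j (hij : i < j)
  have hj : j ≠ 0 := Fin.ne_zero_of_lt hij
  by_cases hi : i = 0
  · simp [hi, sum_arrowhead_apply, hj]
  · simp [arrowhead, hi, hj, hij.ne]

theorem det_arrowhead (a c : R) : (arrowhead n a c).det = (n + 1) * a * (-c) ^ n := by
  rw [← det_updateRow_sum_rows _ 0,
    det_of_isLowerTriangular _ (isLowerTriangular_updateRow_sum_rows_arrowhead a c),
    Fin.prod_univ_succ]
  simp [arrowhead, Fin.succ_ne_zero]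

end Matrix

theorem Real.log_eq_one_iff {x : ℝ} (hx : 0 < x) : log x = 1 ↔ x = exp 1 :=
  ⟨fun h => by rw [← h, exp_log hx], fun h => by rw [h, log_exp]⟩

/-- For the fully symmetric `d`-asset Black–Scholes basket, the focality matrix `M`
(with first column entries `-σ²K/d`, first-row off-diagonal entries `(1-L)d/K`,
remaining diagonal entries `-(1-L)d/K`, `L = log(K/d)`, and zeros elsewhere) has
determinant `(-1)^d σ² K [(1-L) d/K]^{d-1}`, which vanishes iff `K = d·e`. -/
theorem stmt_17 (d : ℕ) (hd : 2 ≤ d) (σ K : ℝ) (hσ : 0 < σ) (hK : 0 < K) :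
    let L : ℝ := Real.log (K / d)
    let M : Matrix (Fin d) (Fin d) ℝ := fun i j =>
      if j.val = 0 then -(σ ^ 2 * K / d)
      else if i.val = 0 then (1 - L) * d / K
      else if i = j then -((1 - L) * d / K)
      else 0
    M.det = (-1) ^ d * σ ^ 2 * K * ((1 - L) * d / K) ^ (d - 1) ∧
    (M.det = 0 ↔ K = d * Real.exp 1) := by
  intro L M
  obtain ⟨n, rfl⟩ : ∃ n, d = n + 1 := ⟨d - 1, by omega⟩
  have hd₀ : (0 : ℝ) < (n + 1 : ℕ) := by positivity
  have hM : M = arrowhead n (-(σ ^ 2 * K / (n + 1 : ℕ))) ((1 - L) * (n + 1 : ℕ) / K) := by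
    ext i j
    simp only [M, arrowhead, of_apply, Fin.val_eq_zero_iff]
  have hdet : M.det = (-1) ^ (n + 1) * σ ^ 2 * K * ((1 - L) * (n + 1 : ℕ) / K) ^ n := by
    rw [hM, det_arrowhead, neg_pow _ n, ← Nat.cast_succ]
    field_simp
    ring
  refine ⟨hdet, ?_⟩
  have hL : K = (n + 1 : ℕ) * exp 1 ↔ L = 1 := by
    rw [Real.log_eq_one_iff (div_pos hK hd₀), div_eq_iff hd₀.ne', mul_comm]
  have hn : n ≠ 0 := by omega
  rw [hdet, hL]
  simp [hσ.ne', hK.ne', hn, Nat.cast_add_one_ne_zero, sub_eq_zero, eq_comm (a := (1 : ℝ))]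
end

section
/- Let d ≥ 2, σ > 0 and K > 0. Set x₀* = (1,…,1) ∈ ℝ^d and p₀* = (log(K/d)/σ², …, log(K/d)/σ²) ∈ ℝ^d, and consider the uncorrelated Hamiltonian H(x,p) = ½ Σ_{i=1}^d (σ xⁱ pⁱ)². Then: (i) the explicit Hamiltonian flow started at (x₀*, p₀*) satisfies at time 1: x^l(1) = K/d for every l (hence Σ_l x^l(1) = K) and p^1(1) = ⋯ = p^d(1) = (d/(σ²K)) log(K/d); and (ii) the minimal energy equals Λ(K) = H(x₀*, p₀*) = (d/2) (log(K/d))² / σ². -/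
open Real

/-- For the fully symmetric `d`-asset Black–Scholes basket with `x₀* = (1,…,1)` and
`p₀* = (log(K/d)/σ², …)`: (i) the explicit Hamiltonian flow at time `1` satisfies
`x^l(1) = K/d` for every `l` (hence `Σ_l x^l(1) = K`) and
`p^1(1) = ⋯ = p^d(1) = (d/(σ²K)) log(K/d)`; (ii) the minimal energy is
`Λ(K) = H(x₀*, p₀*) = (d/2) (log(K/d))²/σ²`. -/
theorem stmt_18 (d : ℕ) (hd : 2 ≤ d) (σ K : ℝ) (hσ : 0 < σ) (hK : 0 < K) :
    let x₀ : Fin d → ℝ := fun _ => 1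
    let p₀ : Fin d → ℝ := fun _ => Real.log (K / d) / σ ^ 2
    let x : ℝ → Fin d → ℝ := fun t l => x₀ l * Real.exp (σ ^ 2 * x₀ l * p₀ l * t)
    let p : ℝ → Fin d → ℝ := fun t l => p₀ l * Real.exp (-(σ ^ 2 * x₀ l * p₀ l) * t)
    (∀ l : Fin d, x 1 l = K / d) ∧
    (∑ l : Fin d, x 1 l) = K ∧
    (∀ l : Fin d, p 1 l = d / (σ ^ 2 * K) * Real.log (K / d)) ∧
    (1 / 2) * ∑ l : Fin d, (σ * x₀ l * p₀ l) ^ 2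
        = (d / 2) * (Real.log (K / d)) ^ 2 / σ ^ 2 := by
  intro x₀ p₀ x p
  have hσ2 : (σ : ℝ) ^ 2 ≠ 0 := by positivity
  have hd0 : (0 : ℝ) < d := by positivity
  have hKd : (0 : ℝ) < K / d := by positivity
  have key : σ ^ 2 * (Real.log (K / d) / σ ^ 2) = Real.log (K / d) := by
    field_simp
  have hx : ∀ l : Fin d, x 1 l = K / d := by
    intro l
    simp only [x, x₀, p₀, one_mul, mul_one]
    rw [key, Real.exp_log hKd]
  refine ⟨hx, ?_, ?_, ?_⟩
  · rw [Finset.sum_congr rfl (fun l _ => hx l)]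
    simp only [Finset.sum_const, Finset.card_univ, Fintype.card_fin, nsmul_eq_mul]
    field_simp
  · intro l
    simp only [p, x₀, p₀, one_mul, mul_one]
    rw [key, Real.exp_neg, Real.exp_log hKd]
    field_simp
  · simp only [x₀, p₀, mul_one]
    rw [Finset.sum_const, Finset.card_univ, Fintype.card_fin, nsmul_eq_mul]
    field_simp
end
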